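/- Let D = (a,b) with a < b and let X_t be a real random variable that is symmetric, i.e., −X_t has the same distribution as X_t. Then (b−a) − ∫_a^b ℙ(X_t + x ∈ (a,b)) dx = 2 ∫_0^{b−a} ℙ(X_t > u) du. -/

import Mathlib

open MeasureTheory ProbabilityTheory Set

/-! The event `X + x ∈ (a, b)` is the complement of the disjoint union of `X ≤ a - x` and
`X ≥ b - x`, and by symmetry `ℙ(X ≤ a - x) = ℙ(X ≥ x - a)`. With `G u = ℙ(X ≥ u)` the integrand is
therefore `1 - G (x - a) - G (b - x)`, and each tail term integrates over `(a, b)` to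
`∫_0^{b-a} G`. Finally `G u = ℙ(X > u)` for all but countably many `u`. -/

theorem Antitone.intervalIntegral_one_sub_comp_sub_right_sub_comp_sub_left {g : ℝ → ℝ}
    (hg : Antitone g) (a b : ℝ) :
    ∫ x in a..b, (1 - g (x - a) - g (b - x)) = (b - a) - 2 * ∫ u in 0..(b - a), g u := by
  have hright : Antitone fun x => g (x - a) := fun _ _ hxy => hg (sub_le_sub_right hxy a)
  have hleft : Monotone fun x => g (b - x) := fun _ _ hxy => hg (sub_le_sub_left hxy b)
  rw [intervalIntegral.integral_sub (intervalIntegrable_const.sub hright.intervalIntegrable)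
      hleft.intervalIntegrable,
    intervalIntegral.integral_sub intervalIntegrable_const hright.intervalIntegrable,
    intervalIntegral.integral_comp_sub_right, intervalIntegral.integral_comp_sub_left]
  simp only [intervalIntegral.integral_const, smul_eq_mul, mul_one, sub_self]
  ring

section

variable {Ω : Type*} [MeasurableSpace Ω] {X : Ω → ℝ}

theorem measure_le_eq_measure_neg_le_of_map_neg_eq (μ : Measure Ω) (hX : Measurable X)
    (hsym : μ.map (fun ω => -X ω) = μ.map X) (c : ℝ) :
    μ {ω | X ω ≤ c} = μ {ω | -c ≤ X ω} := by
  have := congrArg (fun ν : Measure ℝ => ν (Ici (-c))) hsym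
  rw [Measure.map_apply (f := fun ω => -X ω) hX.neg measurableSet_Ici,
    Measure.map_apply hX measurableSet_Ici] at this
  simpa only [preimage, mem_Ici, neg_le_neg_iff] using this

theorem antitone_measureReal_le (μ : Measure Ω) [IsFiniteMeasure μ] :
    Antitone fun u => μ.real {ω | u ≤ X ω} :=
  fun _ _ huv => measureReal_mono fun _ hω => huv.trans hω

theorem measureReal_add_mem_Ioo (μ : Measure Ω) [IsProbabilityMeasure μ] (hX : Measurable X)
    {a b : ℝ} (hab : a < b) (x : ℝ) :
    μ.real {ω | X ω + x ∈ Ioo a b}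
      = 1 - μ.real {ω | X ω ≤ a - x} - μ.real {ω | b - x ≤ X ω} := by
  have hcompl : {ω | X ω + x ∈ Ioo a b} = ({ω | X ω ≤ a - x} ∪ {ω | b - x ≤ X ω})ᶜ := by
    ext ω
    simp only [mem_Ioo, mem_ofPred_eq, mem_compl_iff, mem_union, not_or, not_le]
    constructor <;> rintro ⟨h₁, h₂⟩ <;> constructor <;> linarith
  have hdisj : Disjoint {ω | X ω ≤ a - x} {ω | b - x ≤ X ω} :=
    disjoint_left.mpr fun ω h₁ h₂ => by simp only [mem_ofPred_eq] at h₁ h₂; linarith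
  have hle : MeasurableSet {ω | X ω ≤ a - x} := measurableSet_le hX measurable_const
  have hge : MeasurableSet {ω | b - x ≤ X ω} := measurableSet_le measurable_const hX
  rw [hcompl, measureReal_compl (hle.union hge), measureReal_union hdisj hge, probReal_univ]
  ring

end

theorem setIntegral_Ioo_eq_intervalIntegral {E : Type*} [NormedAddCommGroup E] [NormedSpace ℝ E]
    {f : ℝ → E} {a b : ℝ} (hab : a ≤ b) :
    ∫ x in Ioo a b, f x = ∫ x in a..b, f x := by
  rw [intervalIntegral.integral_of_le hab, integral_Ioc_eq_integral_Ioo]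

/-- For a symmetric real random variable `X_t` and `D = (a,b)`,
`(b-a) - ∫_a^b ℙ(X_t + x ∈ (a,b)) dx = 2 ∫_0^{b-a} ℙ(X_t > u) du`. -/
theorem regular_heat_content_symmetric_identity
    {Ω : Type*} [MeasureSpace Ω] [IsProbabilityMeasure (ℙ : Measure Ω)]
    (a b : ℝ) (hab : a < b) (X : Ω → ℝ) (hX : Measurable X)
    (hsym : Measure.map (fun ω => -X ω) ℙ = Measure.map X ℙ) :
    (b - a) - ∫ x in Set.Ioo a b, (ℙ {ω | X ω + x ∈ Set.Ioo a b}).toReal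
      = 2 * ∫ u in Set.Ioo (0:ℝ) (b - a), (ℙ {ω | u < X ω}).toReal := by
  set g : ℝ → ℝ := fun u => (ℙ : Measure Ω).real {ω | u ≤ X ω}
  have hpoint (x : ℝ) : (ℙ {ω | X ω + x ∈ Ioo a b}).toReal = 1 - g (x - a) - g (b - x) := by
    rw [← measureReal_def, measureReal_add_mem_Ioo ℙ hX hab, measureReal_def,
      measure_le_eq_measure_neg_le_of_map_neg_eq ℙ hX hsym, neg_sub, ← measureReal_def]
  have htail : ∫ u in Ioo 0 (b - a), g u = ∫ u in Ioo 0 (b - a), (ℙ {ω | u < X ω}).toReal := by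
    refine integral_congr_ae ?_
    filter_upwards [ae_restrict_of_ae (meas_le_ae_eq_meas_lt ℙ volume X)] with u hu
    simp only [g, measureReal_def, hu]
  simp_rw [hpoint]
  rw [setIntegral_Ioo_eq_intervalIntegral hab.le,
    (antitone_measureReal_le ℙ).intervalIntegral_one_sub_comp_sub_right_sub_comp_sub_left,
    ← setIntegral_Ioo_eq_intervalIntegral (sub_nonneg.mpr hab.le), htail]
  ring
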